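/- arXiv:1606.04715 — 5 statements merged into one kernel-verified Lean document; each statement's English description precedes it below -/
import Mathlib

section
/- Let V be a finite-dimensional vector space over a field of characteristic zero. A nonzero element L of the second exterior power of V is decomposable (i.e. L = v ∧ w for some vectors v, w in V) if and only if L ∧ L = 0 in the fourth exterior power of V. -/
/-!
For a linear form `d`, contraction `d ⌋ ·` maps `⋀²V` to `V` and is an (even) derivation, so
`L * L = 0` gives `2 • (d ⌋ L) * L = 0`, i.e. `u ∧ L = 0` for `u = d ⌋ L`. Contracting this with
a second form `ψ` yields `ψ u • L = u ∧ (ψ ⌋ L)`, and since `L ≠ 0` some coordinate of `L` in the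
basis of `⋀²V` induced by a basis of `V` is nonzero, which provides `d`, `ψ` with `ψ u ≠ 0`.
-/

open Module ExteriorAlgebra

namespace ExteriorAlgebra

local infixl:70 " ⌋ " => CliffordAlgebra.contractLeft (Q := 0)

section CommRing

variable {R M : Type*} [CommRing R] [AddCommGroup M] [Module R M]

theorem ι_mul_ι_mem_exteriorPower_two (v w : M) : ι R v * ι R w ∈ ⋀[R]^2 M := by
  rw [exteriorPower, pow_two]
  exact Submodule.mul_mem_mul (LinearMap.mem_range_self _ v) (LinearMap.mem_range_self _ w)

@[elab_as_elim]
theorem exteriorPower_two_induction {P : (x : ExteriorAlgebra R M) → x ∈ ⋀[R]^2 M → Prop}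
    (ι_mul_ι : ∀ v w : M, P (ι R v * ι R w) (ι_mul_ι_mem_exteriorPower_two v w))
    (add : ∀ x hx y hy, P x hx → P y hy → P (x + y) (Submodule.add_mem _ hx hy))
    {x : ExteriorAlgebra R M} (hx : x ∈ ⋀[R]^2 M) : P x hx := by
  have hsq : ⋀[R]^2 M = LinearMap.range (ι R) * LinearMap.range (ι R) := by
    rw [exteriorPower, pow_two]
  have key : ∀ y (hy : y ∈ LinearMap.range (ι R) * LinearMap.range (ι R)), P y (hsq ▸ hy) := by
    intro y hy
    induction hy using Submodule.mul_induction_on' with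
    | mem_mul_mem _ hv _ hw =>
      obtain ⟨v, rfl⟩ := hv
      obtain ⟨w, rfl⟩ := hw
      exact ι_mul_ι v w
    | add y _ y' _ ih ih' => exact add _ _ _ _ ih ih'
  exact key x (hsq ▸ hx)

theorem ι_mul_ι_comm (v w : M) : ι R v * ι R w = -(ι R w * ι R v) :=
  eq_neg_of_add_eq_zero_left (ι_add_mul_swap v w)

theorem commute_ι_of_mem_exteriorPower_two (v : M) {x : ExteriorAlgebra R M}
    (hx : x ∈ ⋀[R]^2 M) : Commute (ι R v) x := by
  induction hx using exteriorPower_two_induction with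
  | ι_mul_ι a b =>
    simp only [Commute, SemiconjBy, ← mul_assoc, ι_mul_ι_comm v a, neg_mul]
    rw [mul_assoc, ι_mul_ι_comm v b, mul_neg, neg_neg, mul_assoc]
  | add x _ y _ hx hy => exact hx.add_right hy

theorem ι_mul_ι_mul_self (v w : M) : ι R v * ι R w * (ι R v * ι R w) = 0 := by
  rw [mul_assoc, (commute_ι_of_mem_exteriorPower_two w (ι_mul_ι_mem_exteriorPower_two v w)).eq,
    ← mul_assoc, ← mul_assoc, ι_sq_zero, zero_mul, zero_mul]

theorem contractLeft_ι_mul_ι (d : Dual R M) (v w : M) :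
    d ⌋ (ι R v * ι R w) = ι R (d v • w - d w • v) := by
  rw [CliffordAlgebra.contractLeft_ι_mul, CliffordAlgebra.contractLeft_ι, map_sub, map_smul,
    map_smul, ← Algebra.commutes, ← Algebra.smul_def]

theorem exists_contractLeft_eq_ι (d : Dual R M) {x : ExteriorAlgebra R M}
    (hx : x ∈ ⋀[R]^2 M) : ∃ u : M, d ⌋ x = ι R u := by
  induction hx using exteriorPower_two_induction with
  | ι_mul_ι v w => exact ⟨d v • w - d w • v, contractLeft_ι_mul_ι d v w⟩
  | add x _ y _ hx hy =>
    obtain ⟨u, hu⟩ := hx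
    obtain ⟨u', hu'⟩ := hy
    exact ⟨u + u', by rw [map_add, hu, hu', map_add]⟩

theorem contractLeft_mul_of_mem_exteriorPower_two (d : Dual R M) {x : ExteriorAlgebra R M}
    (hx : x ∈ ⋀[R]^2 M) (y : ExteriorAlgebra R M) :
    d ⌋ (x * y) = d ⌋ x * y + x * (d ⌋ y) := by
  induction hx using exteriorPower_two_induction with
  | ι_mul_ι v w =>
    rw [mul_assoc, CliffordAlgebra.contractLeft_ι_mul, CliffordAlgebra.contractLeft_ι_mul,
      contractLeft_ι_mul_ι, map_sub, map_smul, map_smul]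
    simp only [mul_sub, sub_mul, smul_mul_assoc, mul_smul_comm, mul_assoc]
    abel
  | add x _ y' _ hx hy => simp only [add_mul, map_add, hx, hy]; abel

theorem ι_mul_eq_zero_of_mul_self_eq_zero [Invertible (2 : R)] {x : ExteriorAlgebra R M}
    (hx : x ∈ ⋀[R]^2 M) (hxx : x * x = 0) {d : Dual R M} {u : M} (hu : d ⌋ x = ι R u) :
    ι R u * x = 0 := by
  have h := contractLeft_mul_of_mem_exteriorPower_two d hx x
  rw [hxx, map_zero, hu, ← (commute_ι_of_mem_exteriorPower_two u hx).eq, ← two_smul R] at h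
  simpa using congrArg (⅟(2 : R) • ·) h.symm

theorem smul_eq_ι_mul_ι_of_mul_self_eq_zero [Invertible (2 : R)] {x : ExteriorAlgebra R M}
    (hx : x ∈ ⋀[R]^2 M) (hxx : x * x = 0) {d ψ : Dual R M} {u u' : M}
    (hu : d ⌋ x = ι R u) (hu' : ψ ⌋ x = ι R u') : ψ u • x = ι R u * ι R u' := by
  have h := CliffordAlgebra.contractLeft_ι_mul (Q := 0) ψ u x
  rw [ι_mul_eq_zero_of_mul_self_eq_zero hx hxx hu, map_zero, hu'] at h
  exact sub_eq_zero.mp h.symm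

theorem algebraMap_pairingDual_ιMulti (f : Fin 2 → Dual R M) (x : ⋀[R]^2 M) :
    algebraMap R (ExteriorAlgebra R M) (exteriorPower.pairingDual R M 2
      (exteriorPower.ιMulti R 2 f) x) = f 1 ⌋ (f 0 ⌋ (x : ExteriorAlgebra R M)) := by
  obtain ⟨x, hx⟩ := x
  induction hx using exteriorPower_two_induction with
  | ι_mul_ι v w =>
    have hvw : (⟨ι R v * ι R w, ι_mul_ι_mem_exteriorPower_two v w⟩ : ⋀[R]^2 M) =
        exteriorPower.ιMulti R 2 ![v, w] := by
      ext
      simp [ιMulti_apply]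
    rw [hvw, exteriorPower.pairingDual_ιMulti_ιMulti, Matrix.det_fin_two, ← hvw,
      contractLeft_ι_mul_ι, CliffordAlgebra.contractLeft_ι]
    simp only [Matrix.of_apply, Matrix.cons_val_zero, Matrix.cons_val_one, map_sub, map_smul,
      smul_eq_mul]
    rw [mul_comm (f 1 v)]
  | add x _ y _ hx hy =>
    rw [← AddMemClass.mk_add_mk, map_add, map_add, hx, hy, Submodule.coe_add, map_add, map_add]

theorem exists_contractLeft_contractLeft_ne_zero [Nontrivial R] [Module.Free R M]
    [Module.Finite R M] {x : ExteriorAlgebra R M} (hx : x ∈ ⋀[R]^2 M) (hx0 : x ≠ 0) :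
    ∃ d ψ : Dual R M, ψ ⌋ (d ⌋ x) ≠ 0 := by
  have hx' : (⟨x, hx⟩ : ⋀[R]^2 M) ≠ 0 := fun h ↦ hx0 (congrArg Subtype.val h)
  obtain ⟨s, hs⟩ :=
    Finsupp.ne_iff.mp (((finBasis R M).exteriorPower 2).repr.map_ne_zero_iff.mpr hx')
  rw [Finsupp.zero_apply, exteriorPower.basis_repr_apply, exteriorPower.ιMultiDual,
    exteriorPower.ιMulti_family, ne_eq, ← algebraMap_eq_zero_iff (M := M),
    algebraMap_pairingDual_ιMulti] at hs
  exact ⟨_, _, hs⟩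

end CommRing

end ExteriorAlgebra

/-- A nonzero element `L` of the second exterior power of a finite-dimensional
vector space `V` over a field of characteristic zero is decomposable
(`L = v ∧ w` for some `v w : V`) if and only if `L ∧ L = 0`. -/
theorem stmt_0 (K V : Type*) [Field K] [CharZero K] [AddCommGroup V] [Module K V]
    [FiniteDimensional K V] (L : ExteriorAlgebra K V) (hL : L ∈ ⋀[K]^2 V) (hL0 : L ≠ 0) :
    (∃ v w : V, L = ExteriorAlgebra.ι K v * ExteriorAlgebra.ι K w) ↔ L * L = 0 := by
  refine ⟨fun ⟨v, w, hvw⟩ ↦ hvw ▸ ι_mul_ι_mul_self v w, fun hLL ↦ ?_⟩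
  obtain ⟨d, ψ, hdψ⟩ := exists_contractLeft_contractLeft_ne_zero hL hL0
  obtain ⟨u, hu⟩ := exists_contractLeft_eq_ι d hL
  obtain ⟨u', hu'⟩ := exists_contractLeft_eq_ι ψ hL
  have hψu : ψ u ≠ 0 := by
    rwa [hu, CliffordAlgebra.contractLeft_ι, ne_eq, algebraMap_eq_zero_iff] at hdψ
  have : Invertible (2 : K) := invertibleOfNonzero two_ne_zero
  refine ⟨(ψ u)⁻¹ • u, u', ?_⟩
  rw [map_smul, smul_mul_assoc, ← smul_eq_ι_mul_ι_of_mul_self_eq_zero hL hLL hu hu',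
    inv_smul_smul₀ hψu]
end

section
/- Let V be an (n+1)-dimensional vector space, x ∈ V* a nonzero linear form, V_x = ker x, and ω ∈ ⋀³V*. Let ω_x denote the restriction of ω to V_x. Then the contraction map ρ_{ω∧x} : ⋀²V → ⋀²V*, L ↦ (ω ∧ x)(L ∧ −), has rank equal to 2·rk(ω_x), where rk(ω_x) is the rank of the map V_x → ⋀²V_x*, v ↦ ω_x(v ∧ −). In particular rk ρ_{ω∧x} ≤ 2n. -/
open Module

open Module LinearMap TensorProduct

section tri
variable {K V : Type*} [Field K] [AddCommGroup V] [Module K V]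
variable (ω : AlternatingMap K V K (Fin 3))

lemma tri_add0 (v v' a b : V) : ω ![v + v', a, b] = ω ![v, a, b] + ω ![v', a, b] := by
  have h : ∀ z : V, ![z, a, b] = Function.update ![v, a, b] 0 z := by
    intro z; ext i; fin_cases i <;> simp
  rw [h, h v, h v', ω.map_update_add]; simp

lemma tri_add1 (v a a' b : V) : ω ![v, a + a', b] = ω ![v, a, b] + ω ![v, a', b] := by
  have h : ∀ z : V, ![v, z, b] = Function.update ![v, a, b] 1 z := by
    intro z; ext i; fin_cases i <;> simp
  rw [h, h a, h a', ω.map_update_add]; simp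

lemma tri_add2 (v a b b' : V) : ω ![v, a, b + b'] = ω ![v, a, b] + ω ![v, a, b'] := by
  have h : ∀ z : V, ![v, a, z] = Function.update ![v, a, b] 2 z := by
    intro z; ext i; fin_cases i <;> simp
  rw [h, h b, h b', ω.map_update_add]; simp

lemma tri_smul0 (c : K) (v a b : V) : ω ![c • v, a, b] = c * ω ![v, a, b] := by
  have h : ∀ z : V, ![z, a, b] = Function.update ![v, a, b] 0 z := by
    intro z; ext i; fin_cases i <;> simp
  rw [h, h v, ω.map_update_smul]; simp

lemma tri_smul1 (c : K) (v a b : V) : ω ![v, c • a, b] = c * ω ![v, a, b] := by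
  have h : ∀ z : V, ![v, z, b] = Function.update ![v, a, b] 1 z := by
    intro z; ext i; fin_cases i <;> simp
  rw [h, h a, ω.map_update_smul]; simp

lemma tri_smul2 (c : K) (v a b : V) : ω ![v, a, c • b] = c * ω ![v, a, b] := by
  have h : ∀ z : V, ![v, a, z] = Function.update ![v, a, b] 2 z := by
    intro z; ext i; fin_cases i <;> simp
  rw [h, h b, ω.map_update_smul]; simp

lemma tri_swap01 (v a b : V) : ω ![a, v, b] = - ω ![v, a, b] := by
  have h : ![v, a, b] ∘ Equiv.swap (0 : Fin 3) 1 = ![a, v, b] := by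
    ext i; fin_cases i <;> simp [Equiv.swap_apply_def]
  rw [← h, ω.map_swap _ (by decide : (0 : Fin 3) ≠ 1)]

lemma tri_swap12 (v a b : V) : ω ![v, b, a] = - ω ![v, a, b] := by
  have h : ![v, a, b] ∘ Equiv.swap (1 : Fin 3) 2 = ![v, b, a] := by
    ext i; fin_cases i <;> simp [Equiv.swap_apply_def]
  rw [← h, ω.map_swap _ (by decide : (1 : Fin 3) ≠ 2)]

lemma tri_cyc (v a b : V) : ω ![v, a, b] = ω ![a, b, v] := by
  rw [show ω ![a,b,v] = - ω ![b,a,v] from tri_swap01 ω b a v,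
      show ω ![b,a,v] = - ω ![b,v,a] from (tri_swap12 ω b v a),
      show ω ![b,v,a] = - ω ![v,b,a] from tri_swap01 ω v b a,
      tri_swap12 ω v a b]
  ring

lemma tri_eq00 (v b : V) : ω ![v, v, b] = 0 :=
  ω.map_eq_zero_of_eq _ (by simp : (![v,v,b] 0) = ![v,v,b] 1) (by decide)

lemma tri_eq11 (v b : V) : ω ![b, v, v] = 0 :=
  ω.map_eq_zero_of_eq _ (by simp : (![b,v,v] 1) = ![b,v,v] 2) (by decide)

end tri

section flip
variable {K : Type*} [Field K]

lemma finrank_range_flip {M N : Type*} [AddCommGroup M] [Module K M] [AddCommGroup N] [Module K N]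
    [FiniteDimensional K M] [FiniteDimensional K N] (f : M →ₗ[K] N →ₗ[K] K) :
    Module.finrank K (LinearMap.range f.flip) = Module.finrank K (LinearMap.range f) := by
  have h : f.flip = f.dualMap.comp (Module.Dual.eval K N) := by ext n m; rfl
  rw [h, LinearMap.range_comp, Module.erange_coe, Submodule.map_top,
      LinearMap.finrank_range_dualMap_eq_finrank_range]

end flip

namespace Stmt3Aux

variable {K V : Type*} [Field K] [AddCommGroup V] [Module K V]
variable (ω : AlternatingMap K V K (Fin 3)) (x : Module.Dual K V)

/-- `ρ_{ω∧x}` as a bilinear map into the function space. -/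
def rho : V →ₗ[K] V →ₗ[K] (V → V → K) :=
  LinearMap.mk₂ K (fun v w => fun a b =>
      ω ![w, a, b] * x v - ω ![v, a, b] * x w + ω ![v, w, b] * x a - ω ![v, w, a] * x b)
    (fun v v' w => by
      funext a b
      simp only [tri_add0, map_add, Pi.add_apply]
      ring)
    (fun c v w => by
      funext a b
      simp only [tri_smul0, map_smul, smul_eq_mul, Pi.smul_apply]
      ring)
    (fun v w w' => by
      funext a b
      simp only [tri_add0, tri_add1, map_add, Pi.add_apply]
      ring)
    (fun c v w => by
      funext a b
      simp only [tri_smul0, tri_smul1, map_smul, smul_eq_mul, Pi.smul_apply]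
      ring)

@[simp] lemma rho_apply (v w a b : V) :
    rho ω x v w a b =
      ω ![w, a, b] * x v - ω ![v, a, b] * x w + ω ![v, w, b] * x a - ω ![v, w, a] * x b := rfl

end Stmt3Aux

namespace Stmt3Aux

variable {K V : Type*} [Field K] [AddCommGroup V] [Module K V]
variable (ω : AlternatingMap K V K (Fin 3)) (x : Module.Dual K V)

local notation "W" => LinearMap.ker x

/-- `u ↦ ω_x(u, ·, ·)` into the function space on `W`. -/
def betaLin : W →ₗ[K] (W → W → K) where
  toFun u := fun a b => ω ![(u : V), (a : V), (b : V)]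
  map_add' u u' := by funext a b; simp [tri_add0]
  map_smul' c u := by funext a b; simp [tri_smul0]

@[simp] lemma betaLin_apply (u a b : W) : betaLin ω x u a b = ω ![(u:V), (a:V), (b:V)] := rfl

/-- restriction of a bilinear function to `W`. -/
def res : (V → V → K) →ₗ[K] (W → W → K) where
  toFun B := fun a b => B a b
  map_add' B B' := rfl
  map_smul' c B := rfl

@[simp] lemma res_apply (B : V → V → K) (a b : W) : res x B a b = B a b := rfl

/-- evaluation `B ↦ B(e, ·)|_W`. -/
def sigma (e : V) : (V → V → K) →ₗ[K] (W → K) where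
  toFun B := fun a => B e a
  map_add' B B' := rfl
  map_smul' c B := rfl

@[simp] lemma sigma_apply (e : V) (B : V → V → K) (a : W) : sigma x e B a = B e a := rfl

/-- `γ ↦ γ ∧ x` as bilinear function. -/
def wedge : Module.Dual K V →ₗ[K] (V → V → K) where
  toFun γ := fun a b => γ b * x a - γ a * x b
  map_add' γ γ' := by funext a b; simp; ring
  map_smul' c γ := by funext a b; simp; ring

@[simp] lemma wedge_apply (γ : Module.Dual K V) (a b : V) :
    wedge x γ a b = γ b * x a - γ a * x b := rfl

/-- `(u, u') ↦ ω(u, u', ·)|_W ∈ W*`. -/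
def gLin : W →ₗ[K] W →ₗ[K] Module.Dual K W :=
  LinearMap.mk₂ K (fun u u' =>
      { toFun := fun a => ω ![(u:V), (u':V), (a:V)]
        map_add' := fun a a' => by simp [tri_add2]
        map_smul' := fun c a => by simp [tri_smul2] })
    (fun u u' u'' => by ext a; simp [tri_add0])
    (fun c u u' => by ext a; simp [tri_smul0])
    (fun u u' u'' => by ext a; simp [tri_add1])
    (fun c u u' => by ext a; simp [tri_smul1])

@[simp] lemma gLin_apply (u u' a : W) : gLin ω x u u' a = ω ![(u:V), (u':V), (a:V)] := rfl

/-- pairing `Λ²W × W → K` via the tensor product. -/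
noncomputable def Fbil : (W ⊗[K] W) →ₗ[K] Module.Dual K W := TensorProduct.lift (gLin ω x)

@[simp] lemma Fbil_tmul (u u' : W) : Fbil ω x (u ⊗ₜ[K] u') = gLin ω x u u' := rfl

/-- embedding `W* → (W → K)`. -/
def iot : Module.Dual K W →ₗ[K] (W → K) where
  toFun f := ⇑f
  map_add' f g := rfl
  map_smul' c f := rfl

lemma iot_inj : Function.Injective (iot x) := fun f g h => by
  ext a; exact congrFun h a

/-- `Dual (W⊗W) → (W → W → K)`. -/
noncomputable def kap : Module.Dual K (W ⊗[K] W) →ₗ[K] (W → W → K) where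
  toFun φ := fun a b => φ (a ⊗ₜ b)
  map_add' f g := rfl
  map_smul' c f := rfl

lemma kap_inj : Function.Injective (kap x) := by
  intro f g h
  have : ∀ a b : W, f (a ⊗ₜ b) = g (a ⊗ₜ b) := fun a b => congrFun (congrFun h a) b
  exact TensorProduct.ext' this

end Stmt3Aux

section more
variable {K V : Type*} [Field K] [AddCommGroup V] [Module K V]
variable (ω : AlternatingMap K V K (Fin 3)) (x : Module.Dual K V)

lemma tri_eq02 (v b : V) : ω ![v, b, v] = 0 :=
  ω.map_eq_zero_of_eq _ (by simp : (![v,b,v] 0) = ![v,b,v] 2) (by decide)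

lemma span_setOf_eq_range {M N : Type*} [AddCommGroup M] [Module K M] [AddCommGroup N]
    [Module K N] (f : M →ₗ[K] N) :
    Submodule.span K {y | ∃ v, y = f v} = LinearMap.range f := by
  have h : {y | ∃ v, y = f v} = Set.range f := by
    ext y; exact ⟨fun ⟨v, h⟩ => ⟨v, h.symm⟩, fun ⟨v, h⟩ => ⟨v, h.symm⟩⟩
  rw [h, ← LinearMap.coe_range, Submodule.span_eq]

namespace Stmt3Aux

local notation "W" => LinearMap.ker x

lemma rho_self (v : V) : rho ω x v v = 0 := by
  funext a b; simp [tri_eq00]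

lemma rho_antisymm (v w : V) : rho ω x w v = - rho ω x v w := by
  funext a b
  simp only [rho_apply, Pi.neg_apply]
  rw [show ω ![w,v,b] = -ω ![v,w,b] from tri_swap01 ω v w b,
      show ω ![w,v,a] = -ω ![v,w,a] from tri_swap01 ω v w a]
  ring

/-- the linear map `u ↦ ρ(e, u)` on `W`. -/
noncomputable def Phi (e : V) : W →ₗ[K] (V → V → K) :=
  (rho ω x e).comp (LinearMap.ker x).subtype

lemma Phi_apply (e : V) (u : W) : Phi ω x e u = rho ω x e ↑u := rfl

lemma res_Phi (e : V) (he : x e = 1) (u : W) :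
    res x (Phi ω x e u) = betaLin ω x u := by
  funext a b
  have h1 : x (a : V) = 0 := a.2
  have h2 : x (b : V) = 0 := b.2
  have h3 : x (u : V) = 0 := u.2
  simp [Phi_apply, h1, h2, h3, he]

/-- full-dual version of `ω(u,u',·)`. -/
def gamF (u u' : W) : Module.Dual K V where
  toFun a := ω ![(u : V), (u' : V), a]
  map_add' a a' := by simp [tri_add2]
  map_smul' c a := by simp [tri_smul2]

@[simp] lemma gamF_apply (u u' : W) (a : V) : gamF ω x u u' a = ω ![(u:V), (u':V), a] := rfl

lemma rho_WW_eq_wedge (u u' : W) : rho ω x ↑u ↑u' = wedge x (gamF ω x u u') := by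
  funext a b
  have h1 : x (u : V) = 0 := u.2
  have h2 : x (u' : V) = 0 := u'.2
  simp [h1, h2]

lemma sigma_wedge (e : V) (he : x e = 1) (γ : Module.Dual K V) (a : W) :
    sigma x e (wedge x γ) a = γ a := by
  have h1 : x (a : V) = 0 := a.2
  simp [h1, he]

lemma wedge_eq_zero (e : V) (he : x e = 1) (γ : Module.Dual K V)
    (h : ∀ a : W, γ (a : V) = 0) : wedge x γ = 0 := by
  have key : ∀ a : V, γ a = x a * γ e := by
    intro a
    have haW : a - x a • e ∈ W := by
      simp [LinearMap.mem_ker, map_sub, map_smul, he]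
    have := h ⟨_, haW⟩
    simp only [map_sub, map_smul, smul_eq_mul] at this
    linear_combination this
  funext a b
  simp only [wedge_apply, key a, key b, Pi.zero_apply]
  have hxe : x e = 1 := he
  rw [key e]
  ring

lemma sigma_rho_WW (e : V) (he : x e = 1) (u u' : W) :
    sigma x e (rho ω x ↑u ↑u') = iot x (gLin ω x u u') := by
  funext a
  have h1 : x (u : V) = 0 := u.2
  have h2 : x (u' : V) = 0 := u'.2
  have h3 : x (a : V) = 0 := a.2
  simp [h1, h2, h3, he, iot]

end Stmt3Aux
end more

section more2
variable {K V : Type*} [Field K] [AddCommGroup V] [Module K V]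
variable (ω : AlternatingMap K V K (Fin 3)) (x : Module.Dual K V)

namespace Stmt3Aux

local notation "W" => LinearMap.ker x

lemma Phi_eq_zero (e : V) (he : x e = 1) (u : W)
    (h : betaLin ω x u = 0) : Phi ω x e u = 0 := by
  have h' : ∀ a b : W, ω ![(u : V), (a : V), (b : V)] = 0 :=
    fun a b => congrFun (congrFun h a) b
  have hxu : x (u : V) = 0 := u.2
  funext a b
  have haW : a - x a • e ∈ W := by simp [LinearMap.mem_ker, map_sub, map_smul, he]
  have hbW : b - x b • e ∈ W := by simp [LinearMap.mem_ker, map_sub, map_smul, he]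
  let a' : W := ⟨a - x a • e, haW⟩
  let b' : W := ⟨b - x b • e, hbW⟩
  have ha : a = (a' : V) + x a • e := by simp [a']
  have hb : b = (b' : V) + x b • e := by simp [b']
  have e1 : ω ![(u:V), a, b] = x b * ω ![(u:V), (a':V), e] + x a * ω ![(u:V), e, (b':V)] := by
    conv_lhs => rw [ha, hb]
    simp only [tri_add1, tri_add2, tri_smul1, tri_smul2]
    rw [h' a' b', tri_eq11]
    ring
  have e2 : ω ![e, (u:V), b] = ω ![e, (u:V), (b':V)] := by
    conv_lhs => rw [hb]
    simp only [tri_add2, tri_smul2]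
    rw [tri_eq02]
    ring
  have e3 : ω ![e, (u:V), a] = ω ![e, (u:V), (a':V)] := by
    conv_lhs => rw [ha]
    simp only [tri_add2, tri_smul2]
    rw [tri_eq02]
    ring
  have c1 : ω ![(u:V), (a':V), e] = ω ![e, (u:V), (a':V)] := (tri_cyc ω e ↑u ↑a').symm
  have c2 : ω ![(u:V), e, (b':V)] = - ω ![e, (u:V), (b':V)] := tri_swap01 ω e ↑u ↑b'
  show (rho ω x e ↑u) a b = 0
  rw [rho_apply, e1, e2, e3, c1, c2, he, hxu]
  ring

lemma ker_Phi_eq (e : V) (he : x e = 1) :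
    LinearMap.ker (Phi ω x e) = LinearMap.ker (betaLin ω x) := by
  ext u
  simp only [LinearMap.mem_ker]
  constructor
  · intro hu
    rw [← res_Phi ω x e he u, hu, map_zero]
  · intro hu
    exact Phi_eq_zero ω x e he u hu

end Stmt3Aux
end more2

section more3
variable {K V : Type*} [Field K] [AddCommGroup V] [Module K V]
variable (ω : AlternatingMap K V K (Fin 3)) (x : Module.Dual K V)

namespace Stmt3Aux

local notation "W" => LinearMap.ker x

lemma finrank_S1 [FiniteDimensional K V] (e : V) (he : x e = 1) :
    finrank K (LinearMap.range (Phi ω x e)) = finrank K (LinearMap.range (betaLin ω x)) := by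
  have h1 := LinearMap.finrank_range_add_finrank_ker (Phi ω x e)
  have h2 := LinearMap.finrank_range_add_finrank_ker (betaLin ω x)
  rw [ker_Phi_eq ω x e he] at h1
  omega

lemma S0_le_map_wedge :
    Submodule.span K {B : V → V → K | ∃ u u' : W, B = rho ω x ↑u ↑u'} ≤
      Submodule.map (wedge x)
        (Submodule.span K {γ : Module.Dual K V | ∃ u u' : W, γ = gamF ω x u u'}) := by
  rw [Submodule.span_le]
  rintro B ⟨u, u', rfl⟩
  exact ⟨gamF ω x u u', Submodule.subset_span ⟨u, u', rfl⟩, (rho_WW_eq_wedge ω x u u').symm⟩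

lemma sigma_injOn_S0 (e : V) (he : x e = 1) (B : V → V → K)
    (hB : B ∈ Submodule.span K {B : V → V → K | ∃ u u' : W, B = rho ω x ↑u ↑u'})
    (hs : sigma x e B = 0) : B = 0 := by
  obtain ⟨γ, hγ, rfl⟩ := S0_le_map_wedge ω x hB
  apply wedge_eq_zero x e he
  intro a
  rw [← sigma_wedge x e he γ a, hs]
  rfl

lemma finrank_S0 [FiniteDimensional K V] (e : V) (he : x e = 1) :
    finrank K (Submodule.span K {B : V → V → K | ∃ u u' : W, B = rho ω x ↑u ↑u'}) =
      finrank K (LinearMap.range (betaLin ω x)) := by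
  set S0 : Submodule K (V → V → K) :=
    Submodule.span K {B : V → V → K | ∃ u u' : W, B = rho ω x ↑u ↑u'} with hS0
  have : FiniteDimensional K S0 := Submodule.finiteDimensional_of_le (S0_le_map_wedge ω x)
  -- sigma is injective on S0
  set f : S0 →ₗ[K] (W → K) := (sigma x e).comp S0.subtype with hf
  have hker : LinearMap.ker f = ⊥ := by
    rw [LinearMap.ker_eq_bot']
    rintro ⟨B, hB⟩ hfB
    have hz : sigma x e B = 0 := hfB
    exact Subtype.ext (sigma_injOn_S0 ω x e he B hB hz)
  have h1 := LinearMap.finrank_range_add_finrank_ker f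
  rw [hker, finrank_bot, add_zero] at h1
  have hrange : LinearMap.range f = Submodule.map (sigma x e) S0 := by
    rw [hf, LinearMap.range_comp, Submodule.range_subtype]
  -- identify the image
  have himg : Submodule.map (sigma x e) S0 =
      Submodule.map (iot x) (LinearMap.range (Fbil ω x)) := by
    have hFr : LinearMap.range (Fbil ω x) =
        Submodule.span K {φ : Module.Dual K W | ∃ u u' : W, φ = gLin ω x u u'} := by
      rw [← Submodule.map_top, ← TensorProduct.span_tmul_eq_top K (W) (W), Submodule.map_span]
      congr 1
      ext φ
      constructor
      · rintro ⟨t, ⟨u, u', rfl⟩, rfl⟩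
        exact ⟨u, u', rfl⟩
      · rintro ⟨u, u', rfl⟩
        exact ⟨u ⊗ₜ u', ⟨u, u', rfl⟩, rfl⟩
    rw [hS0, Submodule.map_span, hFr, Submodule.map_span]
    congr 1
    ext g
    constructor
    · rintro ⟨B, ⟨u, u', rfl⟩, rfl⟩
      exact ⟨gLin ω x u u', ⟨u, u', rfl⟩, (sigma_rho_WW ω x e he u u').symm⟩
    · rintro ⟨φ, ⟨u, u', rfl⟩, rfl⟩
      exact ⟨rho ω x ↑u ↑u', ⟨u, u', rfl⟩, sigma_rho_WW ω x e he u u'⟩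
  have h2 : finrank K (Submodule.map (iot x) (LinearMap.range (Fbil ω x))) =
      finrank K (LinearMap.range (Fbil ω x)) :=
    (LinearEquiv.finrank_eq (Submodule.equivMapOfInjective (iot x) (iot_inj x) _)).symm
  have h3 : finrank K (LinearMap.range (Fbil ω x)) =
      finrank K (LinearMap.range (Fbil ω x).flip) :=
    (finrank_range_flip (Fbil ω x)).symm
  have hcomp : (kap x).comp (Fbil ω x).flip = betaLin ω x := by
    apply LinearMap.ext
    intro u
    funext a b
    show ω ![(a : V), (b : V), (u : V)] = ω ![(u : V), (a : V), (b : V)]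
    exact (tri_cyc ω ↑u ↑a ↑b).symm
  have h4 : finrank K (LinearMap.range (Fbil ω x).flip) =
      finrank K (LinearMap.range (betaLin ω x)) := by
    rw [← hcomp, LinearMap.range_comp]
    exact LinearEquiv.finrank_eq (Submodule.equivMapOfInjective (kap x) (kap_inj x) _)
  rw [hrange, himg] at h1
  omega

end Stmt3Aux
end more3

section more4
variable {K V : Type*} [Field K] [AddCommGroup V] [Module K V]
variable (ω : AlternatingMap K V K (Fin 3)) (x : Module.Dual K V)

namespace Stmt3Aux

local notation "W" => LinearMap.ker x

lemma S0_le_ker_res :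
    Submodule.span K {B : V → V → K | ∃ u u' : W, B = rho ω x ↑u ↑u'} ≤
      LinearMap.ker (res x) := by
  rw [Submodule.span_le]
  rintro B ⟨u, u', rfl⟩
  simp only [SetLike.mem_coe, LinearMap.mem_ker]
  funext a b
  have h1 : x (u : V) = 0 := u.2
  have h2 : x (u' : V) = 0 := u'.2
  have h3 : x (a : V) = 0 := a.2
  have h4 : x (b : V) = 0 := b.2
  simp [h1, h2, h3, h4]

lemma S0_inf_S1 (e : V) (he : x e = 1) :
    Submodule.span K {B : V → V → K | ∃ u u' : W, B = rho ω x ↑u ↑u'} ⊓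
      LinearMap.range (Phi ω x e) = ⊥ := by
  rw [eq_bot_iff]
  rintro B ⟨hB0, hB1⟩
  obtain ⟨u, rfl⟩ := hB1
  have h0 : res x (Phi ω x e u) = 0 := S0_le_ker_res ω x hB0
  rw [res_Phi ω x e he u] at h0
  have : u ∈ LinearMap.ker (Phi ω x e) := by
    rw [ker_Phi_eq ω x e he]; exact h0
  simpa using this

lemma S_decomp (e : V) (he : x e = 1) :
    Submodule.span K {B : V → V → K | ∃ v w : V, B = rho ω x v w} =
      Submodule.span K {B : V → V → K | ∃ u u' : W, B = rho ω x ↑u ↑u'} ⊔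
        LinearMap.range (Phi ω x e) := by
  apply le_antisymm
  · rw [Submodule.span_le]
    rintro B ⟨v, w, rfl⟩
    have hvW : v - x v • e ∈ W := by simp [LinearMap.mem_ker, map_sub, map_smul, he]
    have hwW : w - x w • e ∈ W := by simp [LinearMap.mem_ker, map_sub, map_smul, he]
    set v' : W := ⟨v - x v • e, hvW⟩ with hv'
    set w' : W := ⟨w - x w • e, hwW⟩ with hw'
    have hv : v = (v' : V) + x v • e := by simp [hv']
    have hw : w = (w' : V) + x w • e := by simp [hw']
    have key : rho ω x v w = rho ω x ↑v' ↑w' + (x v) • Phi ω x e w' - (x w) • Phi ω x e v' := by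
      conv_lhs => rw [hv, hw]
      simp only [map_add, map_smul, LinearMap.add_apply, LinearMap.smul_apply, Phi_apply]
      rw [rho_self, rho_antisymm ω x e ↑v']
      abel_nf
      module
    rw [SetLike.mem_coe, key]
    apply Submodule.sub_mem
    · apply Submodule.add_mem
      · exact Submodule.mem_sup_left (Submodule.subset_span ⟨v', w', rfl⟩)
      · exact Submodule.smul_mem _ _ (Submodule.mem_sup_right ⟨w', rfl⟩)
    · exact Submodule.smul_mem _ _ (Submodule.mem_sup_right ⟨v', rfl⟩)
  · apply sup_le
    · rw [Submodule.span_le]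
      rintro B ⟨u, u', rfl⟩
      exact Submodule.subset_span ⟨↑u, ↑u', rfl⟩
    · rintro B ⟨u, rfl⟩
      exact Submodule.subset_span ⟨e, ↑u, rfl⟩

end Stmt3Aux
end more4

open Stmt3Aux in
/-- Let `V` be `(n+1)`-dimensional, `x ∈ V*` nonzero with kernel hyperplane
`V_x`, and `ω ∈ ⋀³V*` with restriction `ω_x` to `V_x`. Then the contraction
`ρ_{ω∧x} : ⋀²V → ⋀²V*` has rank `2·rk(ω_x)`, which is at most `2n`. The rank of
`ρ_{ω∧x}` is the dimension of the span of the bilinear forms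
`(a,b) ↦ (ω ∧ x)(v, w, a, b)` for `v, w ∈ V`, and `rk(ω_x)` is the dimension of
the span of the 2-forms `(a,b) ↦ ω(v, a, b)` for `v ∈ V_x`, `a, b ∈ V_x`. -/
theorem stmt_3 (K V : Type*) [Field K] [CharZero K] [AddCommGroup V] [Module K V]
    (n : ℕ) (hdim : finrank K V = n + 1)
    (ω : AlternatingMap K V K (Fin 3)) (x : Module.Dual K V) (hx : x ≠ 0) :
    finrank K (Submodule.span K
        {B : V → V → K | ∃ v w : V,
          B = fun a b =>
            ω ![w, a, b] * x v - ω ![v, a, b] * x w +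
              ω ![v, w, b] * x a - ω ![v, w, a] * x b}) =
      2 * finrank K (Submodule.span K
        {β : ↥(LinearMap.ker x) → ↥(LinearMap.ker x) → K | ∃ v : ↥(LinearMap.ker x),
          β = fun (a b : ↥(LinearMap.ker x)) => ω ![(v : V), (a : V), (b : V)]}) ∧
    finrank K (Submodule.span K
        {B : V → V → K | ∃ v w : V,
          B = fun a b =>
            ω ![w, a, b] * x v - ω ![v, a, b] * x w +
              ω ![v, w, b] * x a - ω ![v, w, a] * x b}) ≤ 2 * n := by
  have hfd : FiniteDimensional K V := .of_finrank_pos (by rw [hdim]; omega)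
  -- find e with x e = 1
  obtain ⟨v₀, hv₀⟩ : ∃ v, x v ≠ 0 := by
    by_contra h
    push_neg at h
    exact hx (LinearMap.ext h)
  set e : V := (x v₀)⁻¹ • v₀ with he'
  have he : x e = 1 := by
    rw [he', map_smul, smul_eq_mul, inv_mul_cancel₀ hv₀]
  -- identify the statement sets
  have hSset : {B : V → V → K | ∃ v w : V,
      B = fun a b =>
        ω ![w, a, b] * x v - ω ![v, a, b] * x w +
          ω ![v, w, b] * x a - ω ![v, w, a] * x b} =
      {B : V → V → K | ∃ v w : V, B = rho ω x v w} := rfl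
  have hRspan : Submodule.span K
      {β : ↥(LinearMap.ker x) → ↥(LinearMap.ker x) → K | ∃ v : ↥(LinearMap.ker x),
        β = fun (a b : ↥(LinearMap.ker x)) => ω ![(v : V), (a : V), (b : V)]} =
      LinearMap.range (betaLin ω x) := span_setOf_eq_range (betaLin ω x)
  rw [hSset, hRspan, S_decomp ω x e he]
  haveI hS0fd : FiniteDimensional K
      (Submodule.span K {B : V → V → K | ∃ u u' : LinearMap.ker x, B = rho ω x ↑u ↑u'}) :=
    Submodule.finiteDimensional_of_le (S0_le_map_wedge ω x)
  have Hsup := Submodule.finrank_sup_add_finrank_inf_eq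
    (Submodule.span K {B : V → V → K | ∃ u u' : LinearMap.ker x, B = rho ω x ↑u ↑u'})
    (LinearMap.range (Phi ω x e))
  rw [S0_inf_S1 ω x e he, finrank_bot, add_zero, finrank_S0 ω x e he, finrank_S1 ω x e he]
    at Hsup
  -- dimension of the kernel hyperplane
  have hrk : LinearMap.range x = ⊤ := by
    rw [LinearMap.range_eq_top]
    intro c
    exact ⟨(c * (x v₀)⁻¹) • v₀, by rw [map_smul, smul_eq_mul]; field_simp⟩
  have hWn : finrank K (LinearMap.ker x) = n := by
    have h := LinearMap.finrank_range_add_finrank_ker x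
    rw [hrk, finrank_top, hdim, finrank_self] at h
    omega
  have hle : finrank K (LinearMap.range (betaLin ω x)) ≤ n := by
    rw [← hWn]
    exact LinearMap.finrank_range_le (betaLin ω x)
  constructor
  · omega
  · omega
end

section
/- Let β ∈ ⋀²V* be a 2-form and x, x' ∈ V* linearly independent linear forms on an (n+1)-dimensional vector space V, with η = β ∧ x ∧ x' ≠ 0. Let β_{x,x'} be the restriction of β to V_{x∧x'} = ker x ∩ ker x'. Then the contraction map ρ_η : ⋀²V → ⋀²V* has rank 2·rk(β_{x,x'}) + 2, which is at most 2n. -/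
open Module
section Aux
variable {K V : Type*} [Field K] [AddCommGroup V] [Module K V]

private lemma upd_zero (u v w : V) : Function.update ![u, v] 0 w = ![w, v] := by
  funext i; fin_cases i <;> simp

private lemma upd_one (u v w : V) : Function.update ![u, v] 1 w = ![u, w] := by
  funext i; fin_cases i <;> simp

variable (β : AlternatingMap K V K (Fin 2))

private lemma b_add_left (u v w : V) : β ![u + v, w] = β ![u, w] + β ![v, w] := by
  simpa [upd_zero] using β.map_update_add (v := ![u, w]) 0 u v

private lemma b_add_right (u v w : V) : β ![u, v + w] = β ![u, v] + β ![u, w] := by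
  simpa [upd_one] using β.map_update_add (v := ![u, v]) 1 v w

private lemma b_smul_left (c : K) (u w : V) : β ![c • u, w] = c * β ![u, w] := by
  simpa [upd_zero, smul_eq_mul] using β.map_update_smul (v := ![u, w]) 0 c u

private lemma b_smul_right (c : K) (u w : V) : β ![u, c • w] = c * β ![u, w] := by
  simpa [upd_one, smul_eq_mul] using β.map_update_smul (v := ![u, w]) 1 c w

private lemma b_same (u : V) : β ![u, u] = 0 :=
  β.map_eq_zero_of_eq _ (by simp) (by decide : (0 : Fin 2) ≠ 1)

private lemma b_anti (u w : V) : β ![w, u] = - β ![u, w] := by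
  have h := β.map_update_add (v := ![u + w, u]) 1 u w
  have h2 : β ![u + w, u + w] = 0 := b_same β _
  rw [upd_one, upd_one, upd_one] at h
  rw [h2] at h
  have h3 : β ![u + w, u] = β ![u, u] + β ![w, u] := b_add_left β u w u
  have h4 : β ![u + w, w] = β ![u, w] + β ![w, w] := b_add_left β u w w
  rw [h3, h4, b_same, b_same] at h
  linear_combination -h

private lemma b_zero_left (w : V) : β ![(0 : V), w] = 0 := by
  simpa using b_smul_left β 0 0 w

private lemma b_zero_right (w : V) : β ![w, (0 : V)] = 0 := by
  simpa using b_smul_right β 0 w 0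

private lemma bsplit (s t e e' : V) (cs cs' ct ct' : K) :
    β ![s + cs • e + cs' • e', t + ct • e + ct' • e'] =
      β ![s, t] + ct * β ![s, e] + ct' * β ![s, e'] - cs * β ![t, e] - cs' * β ![t, e']
        + (cs * ct' - ct * cs') * β ![e, e'] := by
  simp only [b_add_left, b_add_right, b_smul_left, b_smul_right, b_same]
  rw [b_anti β t e, b_anti β t e', b_anti β e e']
  ring
end Aux

section Aux2
variable {K V : Type*} [Field K] [AddCommGroup V] [Module K V]

private lemma exists_dual_pair (x x' : Module.Dual K V) (h : ∀ c : K, c • x' ≠ x) :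
    ∃ e : V, x e = 1 ∧ x' e = 0 := by
  by_cases hw : ∃ w, x' w = 0 ∧ x w ≠ 0
  · obtain ⟨w, hw0, hwne⟩ := hw
    refine ⟨(x w)⁻¹ • w, ?_, ?_⟩
    · simp [inv_mul_cancel₀ hwne]
    · simp [hw0]
  push_neg at hw
  by_cases hx' : x' = 0
  · exfalso
    apply h 0
    have hx0 : x = 0 := by
      ext v
      simpa using hw v (by simp [hx'])
    simp [hx0]
  · exfalso
    obtain ⟨v₀, hv₀⟩ : ∃ v₀, x' v₀ ≠ 0 := by
      by_contra hc
      push_neg at hc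
      exact hx' (by ext v; simpa using hc v)
    apply h (x v₀ * (x' v₀)⁻¹)
    ext v
    have h1 : x' (v - (x' v * (x' v₀)⁻¹) • v₀) = 0 := by
      simp [mul_assoc, inv_mul_cancel₀ hv₀]
    have h2 := hw _ h1
    simp only [map_sub, map_smul, smul_eq_mul, sub_eq_zero] at h2
    simp only [LinearMap.smul_apply, smul_eq_mul]
    rw [h2]
    field_simp
end Aux2

set_option maxHeartbeats 2000000 in
/-- Let `β ∈ ⋀²V*` and `x, x' ∈ V*` linearly independent on an
`(n+1)`-dimensional space `V`, with `η = β ∧ x ∧ x' ≠ 0`. Writing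
`γ = x ∧ x'` and `β_{x,x'}` for the restriction of `β` to
`V_{x∧x'} = ker x ∩ ker x'`, the contraction `ρ_η : ⋀²V → ⋀²V*` has rank
`2·rk(β_{x,x'}) + 2 ≤ 2n`. The rank of `ρ_η` is the dimension of the span of
the bilinear forms `(a,b) ↦ η(v, w, a, b)` for `v, w ∈ V`. -/
theorem stmt_4 (K V : Type*) [Field K] [CharZero K] [AddCommGroup V] [Module K V]
    (n : ℕ) (hdim : finrank K V = n + 1)
    (β : AlternatingMap K V K (Fin 2)) (x x' : Module.Dual K V)
    (hx : LinearIndependent K ![x, x'])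
    (hη : ¬ (∀ v w a b : V,
      β ![v, w] * (x a * x' b - x b * x' a)
        - β ![v, a] * (x w * x' b - x b * x' w)
        + β ![v, b] * (x w * x' a - x a * x' w)
        + β ![a, b] * (x v * x' w - x w * x' v)
        - β ![w, b] * (x v * x' a - x a * x' v)
        + β ![w, a] * (x v * x' b - x b * x' v) = 0)) :
    finrank K (Submodule.span K
        {B : V → V → K | ∃ v w : V,
          B = fun a b =>
            β ![v, w] * (x a * x' b - x b * x' a)
              - β ![v, a] * (x w * x' b - x b * x' w)
              + β ![v, b] * (x w * x' a - x a * x' w)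
              + β ![a, b] * (x v * x' w - x w * x' v)
              - β ![w, b] * (x v * x' a - x a * x' v)
              + β ![w, a] * (x v * x' b - x b * x' v)}) =
      2 * finrank K (Submodule.span K
        {g : ↥(LinearMap.ker x ⊓ LinearMap.ker x') → K |
          ∃ v : ↥(LinearMap.ker x ⊓ LinearMap.ker x'),
            g = fun (a : ↥(LinearMap.ker x ⊓ LinearMap.ker x')) => β ![(v : V), (a : V)]}) + 2 ∧
    finrank K (Submodule.span K
        {B : V → V → K | ∃ v w : V,
          B = fun a b =>
            β ![v, w] * (x a * x' b - x b * x' a)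
              - β ![v, a] * (x w * x' b - x b * x' w)
              + β ![v, b] * (x w * x' a - x a * x' w)
              + β ![a, b] * (x v * x' w - x w * x' v)
              - β ![w, b] * (x v * x' a - x a * x' v)
              + β ![w, a] * (x v * x' b - x b * x' v)}) ≤ 2 * n := by
  have hfd : FiniteDimensional K V := FiniteDimensional.of_finrank_pos (by rw [hdim]; omega)
  rw [linearIndependent_fin2] at hx
  simp only [Matrix.cons_val_one, Matrix.head_cons, Matrix.cons_val_zero] at hx
  obtain ⟨hx'ne, hno⟩ := hx
  obtain ⟨e, hxe, hx'e⟩ := exists_dual_pair x x' hno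
  have hno' : ∀ c : K, c • x ≠ x' := by
    intro c hc
    have hcne : c ≠ 0 := by
      rintro rfl
      simp only [zero_smul] at hc
      exact hx'ne hc.symm
    apply hno c⁻¹
    rw [← hc, smul_smul, inv_mul_cancel₀ hcne, one_smul]
  obtain ⟨e', hx'e', hxe'⟩ := exists_dual_pair x' x hno'
  set W := LinearMap.ker x ⊓ LinearMap.ker x' with hWdef
  have hmemW : ∀ a : V, a - x a • e - x' a • e' ∈ W := by
    intro a
    refine Submodule.mem_inf.mpr ⟨?_, ?_⟩ <;>
      simp [LinearMap.mem_ker, hxe, hx'e, hxe', hx'e', mul_comm]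
  let p : V →ₗ[K] ↥W :=
    LinearMap.codRestrict W (LinearMap.id - x.smulRight e - x'.smulRight e') hmemW
  have hp : ∀ a : V, (↑(p a) : V) = a - x a • e - x' a • e' := fun a => rfl
  have hxW : ∀ s : ↥W, x ↑s = 0 := fun s => (Submodule.mem_inf.mp s.2).1
  have hx'W : ∀ s : ↥W, x' ↑s = 0 := fun s => (Submodule.mem_inf.mp s.2).2
  have hpW : ∀ s : ↥W, p ↑s = s := by
    intro s
    apply Subtype.ext
    rw [hp, hxW s, hx'W s]
    simp
  have hsplit : ∀ u u' : V, β ![u, u'] =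
      β ![↑(p u), ↑(p u')] + x u' * β ![↑(p u), e] + x' u' * β ![↑(p u), e']
        - x u * β ![↑(p u'), e] - x' u * β ![↑(p u'), e']
        + (x u * x' u' - x u' * x' u) * β ![e, e'] := by
    intro u u'
    have hu : ∀ z : V, (↑(p z) : V) + x z • e + x' z • e' = z := by
      intro z; rw [hp]; abel
    conv_lhs => rw [← hu u, ← hu u']
    exact bsplit β _ _ e e' (x u) (x' u) (x u') (x' u')
  obtain ⟨u₀, u₁, hu01⟩ : ∃ u₀ u₁ : ↥W, β ![(↑u₀ : V), ↑u₁] ≠ 0 := by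
    by_contra hc
    push_neg at hc
    apply hη
    intro v w a b
    rw [hsplit v w, hsplit v a, hsplit v b, hsplit a b, hsplit w b, hsplit w a]
    simp only [hc]
    ring
  -- core setup
  classical
  set S : Set (V → V → K) := {B : V → V → K | ∃ v w : V,
          B = fun a b =>
            β ![v, w] * (x a * x' b - x b * x' a)
              - β ![v, a] * (x w * x' b - x b * x' w)
              + β ![v, b] * (x w * x' a - x a * x' w)
              + β ![a, b] * (x v * x' w - x w * x' v)
              - β ![w, b] * (x v * x' a - x a * x' v)
              + β ![w, a] * (x v * x' b - x b * x' v)} with hSdef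
  set N := Submodule.span K S with hNdef
  set R := Submodule.span K
        {g : ↥W → K | ∃ v : ↥W, g = fun (a : ↥W) => β ![(v : V), (a : V)]} with hRdef
  have hSmem : ∀ v w : V, (fun a b =>
            β ![v, w] * (x a * x' b - x b * x' a)
              - β ![v, a] * (x w * x' b - x b * x' w)
              + β ![v, b] * (x w * x' a - x a * x' w)
              + β ![a, b] * (x v * x' w - x w * x' v)
              - β ![w, b] * (x v * x' a - x a * x' v)
              + β ![w, a] * (x v * x' b - x b * x' v)) ∈ N :=
    fun v w => Submodule.subset_span ⟨v, w, rfl⟩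
  show finrank K ↥N = 2 * finrank K ↥R + 2 ∧ finrank K ↥N ≤ 2 * n
  -- gamma, B0, Phi
  have hpe : (↑(p e) : V) = 0 := by rw [hp, hxe, hx'e]; simp
  have hpe' : (↑(p e') : V) = 0 := by rw [hp, hxe', hx'e']; simp
  let γt : V → V → K := fun a b => x a * x' b - x b * x' a
  have hγt : ∀ a b, γt a b = x a * x' b - x b * x' a := fun _ _ => rfl
  let B₀ : V → V → K := fun a b =>
            β ![e, e'] * (x a * x' b - x b * x' a)
              - β ![e, a] * (x e' * x' b - x b * x' e')
              + β ![e, b] * (x e' * x' a - x a * x' e')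
              + β ![a, b] * (x e * x' e' - x e' * x' e)
              - β ![e', b] * (x e * x' a - x a * x' e)
              + β ![e', a] * (x e * x' b - x b * x' e)
  have hB₀ : ∀ a b, B₀ a b =
            β ![e, e'] * (x a * x' b - x b * x' a)
              - β ![e, a] * (x e' * x' b - x b * x' e')
              + β ![e, b] * (x e' * x' a - x a * x' e')
              + β ![a, b] * (x e * x' e' - x e' * x' e)
              - β ![e', b] * (x e * x' a - x a * x' e)
              + β ![e', a] * (x e * x' b - x b * x' e) := fun _ _ => rfl
  have hB₀mem : B₀ ∈ N := hSmem e e'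
  let Φ₂ : (↥W → K) → (V → V → K) := fun f a b => x' a * f (p b) - x' b * f (p a)
  let Φ₃ : (↥W → K) → (V → V → K) := fun f a b => x b * f (p a) - x a * f (p b)
  have hΦ₂ : ∀ f a b, Φ₂ f a b = x' a * f (p b) - x' b * f (p a) := fun _ _ _ => rfl
  have hΦ₃ : ∀ f a b, Φ₃ f a b = x b * f (p a) - x a * f (p b) := fun _ _ _ => rfl
  -- gamma tilde lies in N
  have hγmem : γt ∈ N := by
    have h1 := hSmem (↑u₀) (↑u₁)
    have h2 : (fun a b =>
            β ![(↑u₀ : V), ↑u₁] * (x a * x' b - x b * x' a)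
              - β ![(↑u₀ : V), a] * (x ↑u₁ * x' b - x b * x' ↑u₁)
              + β ![(↑u₀ : V), b] * (x ↑u₁ * x' a - x a * x' ↑u₁)
              + β ![a, b] * (x ↑u₀ * x' ↑u₁ - x ↑u₁ * x' ↑u₀)
              - β ![(↑u₁ : V), b] * (x ↑u₀ * x' a - x a * x' ↑u₀)
              + β ![(↑u₁ : V), a] * (x ↑u₀ * x' b - x b * x' ↑u₀))
          = β ![(↑u₀ : V), ↑u₁] • γt := by
      funext a b
      simp only [Pi.smul_apply, smul_eq_mul, hγt, hxW, hx'W]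
      ring
    rw [h2] at h1
    have h3 := Submodule.smul_mem N (β ![(↑u₀ : V), ↑u₁])⁻¹ h1
    rwa [smul_smul, inv_mul_cancel₀ hu01, one_smul] at h3
  -- Phi2 and Phi3 of generators lie in N
  have hΦ₂gen : ∀ u : ↥W, Φ₂ (fun a : ↥W => β ![(u : V), (a : V)]) ∈ N := by
    intro u
    have h1 := hSmem (↑u) e
    have h2 : (fun a b =>
            β ![(↑u : V), e] * (x a * x' b - x b * x' a)
              - β ![(↑u : V), a] * (x e * x' b - x b * x' e)
              + β ![(↑u : V), b] * (x e * x' a - x a * x' e)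
              + β ![a, b] * (x ↑u * x' e - x e * x' ↑u)
              - β ![e, b] * (x ↑u * x' a - x a * x' ↑u)
              + β ![e, a] * (x ↑u * x' b - x b * x' ↑u))
          = Φ₂ (fun a : ↥W => β ![(u : V), (a : V)]) := by
      funext a b
      show _ = x' a * β ![(↑u : V), ↑(p b)] - x' b * β ![(↑u : V), ↑(p a)]
      rw [hsplit (↑u) a, hsplit (↑u) b]
      simp only [hpW, hxW, hx'W, hxe, hx'e, hxe', hx'e']
      ring
    rw [h2] at h1
    exact h1
  have hΦ₃gen : ∀ u : ↥W, Φ₃ (fun a : ↥W => β ![(u : V), (a : V)]) ∈ N := by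
    intro u
    have h1 := hSmem (↑u) e'
    have h2 : (fun a b =>
            β ![(↑u : V), e'] * (x a * x' b - x b * x' a)
              - β ![(↑u : V), a] * (x e' * x' b - x b * x' e')
              + β ![(↑u : V), b] * (x e' * x' a - x a * x' e')
              + β ![a, b] * (x ↑u * x' e' - x e' * x' ↑u)
              - β ![e', b] * (x ↑u * x' a - x a * x' ↑u)
              + β ![e', a] * (x ↑u * x' b - x b * x' ↑u))
          = Φ₃ (fun a : ↥W => β ![(u : V), (a : V)]) := by
      funext a b
      show _ = x b * β ![(↑u : V), ↑(p a)] - x a * β ![(↑u : V), ↑(p b)]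
      rw [hsplit (↑u) a, hsplit (↑u) b]
      simp only [hpW, hxW, hx'W, hxe, hx'e, hxe', hx'e']
      ring
    rw [h2] at h1
    exact h1
  -- linear map versions
  let Φ₂L : (↥W → K) →ₗ[K] (V → V → K) :=
    { toFun := fun f a b => x' a * f (p b) - x' b * f (p a),
      map_add' := by intro f g; funext a b; simp only [Pi.add_apply]; ring
      map_smul' := by
        intro c f; funext a b
        simp only [Pi.smul_apply, smul_eq_mul, RingHom.id_apply]; ring }
  let Φ₃L : (↥W → K) →ₗ[K] (V → V → K) :=
    { toFun := fun f a b => x b * f (p a) - x a * f (p b),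
      map_add' := by intro f g; funext a b; simp only [Pi.add_apply]; ring
      map_smul' := by
        intro c f; funext a b
        simp only [Pi.smul_apply, smul_eq_mul, RingHom.id_apply]; ring }
  have hΦ₂L : ∀ f, Φ₂L f = Φ₂ f := fun _ => rfl
  have hΦ₃L : ∀ f, Φ₃L f = Φ₃ f := fun _ => rfl
  have hΦ₂R : ∀ g, g ∈ R → Φ₂L g ∈ N := by
    intro g hg
    induction hg using Submodule.span_induction with
    | mem g hgen =>
      obtain ⟨u, rfl⟩ := hgen
      rw [hΦ₂L]; exact hΦ₂gen u
    | zero => rw [map_zero]; exact N.zero_mem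
    | add f g _ _ hf hg => rw [map_add]; exact N.add_mem hf hg
    | smul c f _ hf => rw [map_smul]; exact N.smul_mem c hf
  have hΦ₃R : ∀ g, g ∈ R → Φ₃L g ∈ N := by
    intro g hg
    induction hg using Submodule.span_induction with
    | mem g hgen =>
      obtain ⟨u, rfl⟩ := hgen
      rw [hΦ₃L]; exact hΦ₃gen u
    | zero => rw [map_zero]; exact N.zero_mem
    | add f g _ _ hf hg => rw [map_add]; exact N.add_mem hf hg
    | smul c f _ hf => rw [map_smul]; exact N.smul_mem c hf
  -- the big linear map
  let Θ : (K × ↥R × ↥R × K) →ₗ[K] (V → V → K) :=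
    LinearMap.coprod (LinearMap.toSpanSingleton K _ γt)
      (LinearMap.coprod (Φ₂L.comp R.subtype)
        (LinearMap.coprod (Φ₃L.comp R.subtype) (LinearMap.toSpanSingleton K _ B₀)))
  have hΘ : ∀ q : K × ↥R × ↥R × K,
      Θ q = q.1 • γt + (Φ₂L ↑q.2.1 + (Φ₃L ↑q.2.2.1 + q.2.2.2 • B₀)) := fun _ => rfl
  have hΘapp : ∀ (c d : K) (f f' : ↥R) (a b : V), Θ (c, f, f', d) a b =
      c * γt a b + ((x' a * (↑f : ↥W → K) (p b) - x' b * (↑f : ↥W → K) (p a))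
        + ((x b * (↑f' : ↥W → K) (p a) - x a * (↑f' : ↥W → K) (p b)) + d * B₀ a b)) :=
    fun _ _ _ _ _ _ => rfl
  -- range of Theta is N
  have hrange : LinearMap.range Θ = N := by
    apply le_antisymm
    · rintro B ⟨⟨c, f, f', d⟩, rfl⟩
      rw [hΘ]
      exact N.add_mem (N.smul_mem _ hγmem)
        (N.add_mem (hΦ₂R _ f.2) (N.add_mem (hΦ₃R _ f'.2) (N.smul_mem _ hB₀mem)))
    · rw [hNdef, Submodule.span_le]
      rintro B ⟨v, w, rfl⟩
      have hfv : (fun a : ↥W => β ![(↑(p v) : V), (↑a : V)]) ∈ R :=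
        Submodule.subset_span ⟨p v, rfl⟩
      have hfw : (fun a : ↥W => β ![(↑(p w) : V), (↑a : V)]) ∈ R :=
        Submodule.subset_span ⟨p w, rfl⟩
      refine ⟨(β ![(↑(p v) : V), ↑(p w)],
        ⟨x w • (fun a : ↥W => β ![(↑(p v) : V), (↑a : V)])
          - x v • (fun a : ↥W => β ![(↑(p w) : V), (↑a : V)]),
          R.sub_mem (R.smul_mem _ hfv) (R.smul_mem _ hfw)⟩,
        ⟨x' w • (fun a : ↥W => β ![(↑(p v) : V), (↑a : V)])
          - x' v • (fun a : ↥W => β ![(↑(p w) : V), (↑a : V)]),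
          R.sub_mem (R.smul_mem _ hfv) (R.smul_mem _ hfw)⟩,
        x v * x' w - x w * x' v), ?_⟩
      funext a b
      rw [hΘapp]
      simp only [Pi.sub_apply, Pi.smul_apply, smul_eq_mul, hB₀]
      rw [hsplit v w, hsplit v a, hsplit v b, hsplit a b, hsplit w b, hsplit w a,
        hsplit e a, hsplit e b, hsplit e' a, hsplit e' b]
      simp only [hpe, hpe', b_zero_left, b_zero_right, hxe, hx'e, hxe', hx'e', hγt]
      ring
  -- injectivity of Theta
  have hinj : Function.Injective Θ := by
    apply LinearMap.ker_eq_bot.mp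
    rw [LinearMap.ker_eq_bot']
    rintro ⟨c, f, f', d⟩ hq
    have happ : ∀ a b : V,
        c * γt a b + ((x' a * (↑f : ↥W → K) (p b) - x' b * (↑f : ↥W → K) (p a))
          + ((x b * (↑f' : ↥W → K) (p a) - x a * (↑f' : ↥W → K) (p b)) + d * B₀ a b)) = 0 := by
      intro a b
      have h := congrFun (congrFun hq a) b
      rw [hΘapp] at h
      simpa using h
    have hd : d = 0 := by
      have h1 := happ ↑u₀ ↑u₁
      rw [hγt, hB₀] at h1
      simp only [hxW, hx'W, hpW] at h1
      have h2 : d * β ![(↑u₀ : V), ↑u₁] = 0 := by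
        rw [hxe, hx'e, hxe', hx'e'] at h1
        linear_combination h1
      rcases mul_eq_zero.mp h2 with h | h
      · exact h
      · exact absurd h hu01
    have hf : f = 0 := by
      apply Subtype.ext
      funext t
      have h1 := happ e' ↑t
      rw [hγt, hB₀] at h1
      simp only [hxW, hx'W, hpW, hxe, hx'e, hxe', hx'e', hpe', hd] at h1
      show (↑f : ↥W → K) t = 0
      linear_combination h1
    have hf' : f' = 0 := by
      apply Subtype.ext
      funext t
      have h1 := happ e ↑t
      rw [hγt, hB₀] at h1
      simp only [hxW, hx'W, hpW, hxe, hx'e, hxe', hx'e', hpe, hd, hf] at h1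
      show (↑f' : ↥W → K) t = 0
      simp only [ZeroMemClass.coe_zero, Pi.zero_apply] at h1
      linear_combination -h1
    have hc : c = 0 := by
      have h1 := happ e e'
      rw [hγt, hB₀] at h1
      simp only [hxe, hx'e, hxe', hx'e', hpe, hpe', hd, hf, hf',
        ZeroMemClass.coe_zero, Pi.zero_apply] at h1
      linear_combination h1
    rw [hc, hf, hf', hd]
    rfl
  -- finite dimensionality of R
  let ι : Module.Dual K ↥W →ₗ[K] (↥W → K) :=
    { toFun := fun ℓ => ⇑ℓ, map_add' := fun _ _ => rfl, map_smul' := fun _ _ => rfl }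
  have hRle : R ≤ LinearMap.range ι := by
    rw [hRdef, Submodule.span_le]
    rintro g ⟨u, rfl⟩
    exact ⟨{ toFun := fun a => β ![(↑u : V), (↑a : V)]
             map_add' := by
               intro s t
               show β ![(↑u : V), ↑(s + t)] = _
               rw [Submodule.coe_add, b_add_right]
             map_smul' := by
               intro cs t
               show β ![(↑u : V), ↑(cs • t)] = _
               rw [Submodule.coe_smul, b_smul_right, RingHom.id_apply, smul_eq_mul] }, rfl⟩
  have hRfd : FiniteDimensional K ↥R := Submodule.finiteDimensional_of_le hRle
  -- rank computation
  have hfinN : finrank K ↥N = finrank K (K × ↥R × ↥R × K) := by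
    rw [← hrange]
    exact LinearMap.finrank_range_of_inj hinj
  have hfinprod : finrank K (K × ↥R × ↥R × K) = 2 * finrank K ↥R + 2 := by
    rw [Module.finrank_prod, Module.finrank_prod, Module.finrank_prod, Module.finrank_self]
    omega
  have hmain : finrank K ↥N = 2 * finrank K ↥R + 2 := hfinN.trans hfinprod
  -- dimension bounds
  haveI hWfd : FiniteDimensional K ↥W := inferInstance
  haveI hDualfd : FiniteDimensional K (Module.Dual K ↥W) := inferInstance
  haveI hrangefd : Module.Finite K ↥(LinearMap.range ι) := Module.Finite.range ι
  have hrW : finrank K ↥R ≤ finrank K ↥W := by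
    calc finrank K ↥R ≤ finrank K ↥(LinearMap.range ι) := Submodule.finrank_mono hRle
      _ ≤ finrank K (Module.Dual K ↥W) := LinearMap.finrank_range_le ι
      _ = finrank K ↥W := Subspace.dual_finrank_eq
  have hWker : W < LinearMap.ker x := by
    refine lt_of_le_of_ne inf_le_left ?_
    intro h
    have he' : e' ∈ W := by rw [h]; exact LinearMap.mem_ker.mpr hxe'
    have h0 : x' e' = 0 := hx'W ⟨e', he'⟩
    rw [hx'e'] at h0
    exact one_ne_zero h0
  have hkertop : LinearMap.ker x < ⊤ := by
    refine lt_top_iff_ne_top.mpr ?_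
    intro h
    have he : e ∈ LinearMap.ker x := by rw [h]; trivial
    have h0 : x e = 0 := LinearMap.mem_ker.mp he
    rw [hxe] at h0
    exact one_ne_zero h0
  have h1 : finrank K ↥W < finrank K ↥(LinearMap.ker x) :=
    Submodule.finrank_lt_finrank_of_lt hWker
  have h2 : finrank K ↥(LinearMap.ker x) < finrank K V := by
    have h3 := Submodule.finrank_lt_finrank_of_lt hkertop
    rwa [finrank_top] at h3
  rw [hdim] at h2
  exact ⟨hmain, by omega⟩
end

section
/- Let ω ∈ ⋀³V* be a 3-form on a finite-dimensional vector space V. If for every nonzero v ∈ V the 2-form ω(v) = ω(v ∧ − ∧ −) has rank greater than 2 (condition GC3), then: (a) ω is indecomposable, i.e. the map V* → ⋀⁴V*, x ↦ ω ∧ x, is injective (GC1), and (b) the map V → ⋀²V*, v ↦ ω(v), is injective (GC2). -/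
/-! If `ω ∧ x = 0` with `x ≠ 0`, pick `v₀` with `x v₀ ≠ 0`. For `v ∈ ker x`, evaluating `ω ∧ x` on
`(v₀, v, w, u)` writes `ω(v, w, -)` as a combination of `x` and `ω(v₀, v, -)`, so `ω(v)` has rank
at most 2. By (GC3) this forces `ker x = 0`; but then `V = K v₀`, so `ω(v₀) = 0`, which contradicts
(GC2), itself immediate from (GC3). -/

open Module

section

variable {K V : Type*} [Field K] [AddCommGroup V] [Module K V]

lemma finrank_span_le_two_of_subset_span_pair {W : Type*} [AddCommGroup W] [Module K W]
    {s : Set W} {a b : W} (hs : s ⊆ Submodule.span K {a, b}) :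
    finrank K (Submodule.span K s) ≤ 2 := by
  classical
  have hpair : finrank K (Submodule.span K ({a, b} : Set W)) ≤ 2 := by
    have := finrank_span_finset_le_card (R := K) ({a, b} : Finset W)
    rw [Finset.coe_pair] at this
    exact this.trans Finset.card_le_two
  have : FiniteDimensional K (Submodule.span K ({a, b} : Set W)) :=
    FiniteDimensional.span_of_finite K ((Set.finite_singleton b).insert a)
  exact (Submodule.finrank_mono (Submodule.span_le.mpr hs)).trans hpair

/-- Its dimension is the rank of the 2-form `ω(v)`. -/
def contractionSpan (ω : AlternatingMap K V K (Fin 3)) (v : V) : Submodule K (V → K) :=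
  Submodule.span K {g : V → K | ∃ w : V, g = fun u => ω ![v, w, u]}

lemma eq_zero_of_contraction_eq_zero {ω : AlternatingMap K V K (Fin 3)}
    (hGC3 : ∀ v : V, v ≠ 0 → 2 < finrank K (contractionSpan ω v))
    {v : V} (hv : ∀ a b : V, ω ![v, a, b] = 0) : v = 0 := by
  by_contra hv0
  have hbot : contractionSpan ω v = ⊥ := by
    refine Submodule.span_eq_bot.mpr ?_
    rintro _ ⟨w, rfl⟩
    exact funext (hv w)
  have h3 := hGC3 v hv0
  rw [hbot, finrank_bot] at h3
  omega

lemma finrank_contractionSpan_le_two {ω : AlternatingMap K V K (Fin 3)} {x : Dual K V}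
    (hx : ∀ v₀ v₁ v₂ v₃ : V,
      ω ![v₁, v₂, v₃] * x v₀ - ω ![v₀, v₂, v₃] * x v₁ +
        ω ![v₀, v₁, v₃] * x v₂ - ω ![v₀, v₁, v₂] * x v₃ = 0)
    {v₀ v : V} (hv₀ : x v₀ ≠ 0) (hv : x v = 0) :
    finrank K (contractionSpan ω v) ≤ 2 := by
  refine finrank_span_le_two_of_subset_span_pair (a := ⇑x) (b := fun u => ω ![v₀, v, u]) ?_
  rintro _ ⟨w, rfl⟩
  have hcomb : (fun u => ω ![v, w, u])
      = (ω ![v₀, v, w] / x v₀) • ⇑x + (-x w / x v₀) • fun u => ω ![v₀, v, u] := by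
    funext u
    have h := hx v₀ v w u
    rw [hv] at h
    simp only [Pi.add_apply, Pi.smul_apply, smul_eq_mul]
    field_simp
    linear_combination h
  rw [hcomb]
  exact Submodule.add_mem _ (Submodule.smul_mem _ _ (Submodule.subset_span (by simp)))
    (Submodule.smul_mem _ _ (Submodule.subset_span (by simp)))

lemma alternatingMap_eq_zero_of_ker_eq_bot (ω : AlternatingMap K V K (Fin 3)) {x : Dual K V}
    (hx : LinearMap.ker x = ⊥) {v₀ : V} (hv₀ : x v₀ ≠ 0) (a b : V) : ω ![v₀, a, b] = 0 := by
  refine ω.map_linearDependent _ (Fintype.not_linearIndependent_iff.mpr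
    ⟨![x a, -x v₀, 0], ?_, 1, by simpa using hv₀⟩)
  have hrel : x a • v₀ - x v₀ • a = 0 := LinearMap.ker_eq_bot'.mp hx _ (by simp [mul_comm])
  simpa [Fin.sum_univ_three, sub_eq_add_neg] using hrel

end

theorem stmt_5_general (K V : Type*) [Field K] [AddCommGroup V] [Module K V]
    (ω : AlternatingMap K V K (Fin 3))
    (hGC3 : ∀ v : V, v ≠ 0 →
      2 < finrank K (Submodule.span K
        {g : V → K | ∃ w : V, g = fun u => ω ![v, w, u]})) :
    (∀ x : Module.Dual K V,
      (∀ v₀ v₁ v₂ v₃ : V,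
        ω ![v₁, v₂, v₃] * x v₀ - ω ![v₀, v₂, v₃] * x v₁ +
          ω ![v₀, v₁, v₃] * x v₂ - ω ![v₀, v₁, v₂] * x v₃ = 0) → x = 0) ∧
    (∀ v : V, (∀ a b : V, ω ![v, a, b] = 0) → v = 0) := by
  refine ⟨fun x hx => ?_, fun v hv => eq_zero_of_contraction_eq_zero hGC3 hv⟩
  by_contra hx0
  obtain ⟨v₀, hv₀⟩ : ∃ v₀, x v₀ ≠ 0 := by
    by_contra! h
    exact hx0 (LinearMap.ext h)
  by_cases hker : LinearMap.ker x = ⊥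
  · have hv₀0 := eq_zero_of_contraction_eq_zero hGC3
      (alternatingMap_eq_zero_of_ker_eq_bot ω hker hv₀)
    exact hv₀ (by simp [hv₀0])
  · obtain ⟨v, hxv, hv⟩ := Submodule.exists_mem_ne_zero_of_ne_bot hker
    exact (hGC3 v hv).not_ge (finrank_contractionSpan_le_two hx hv₀ hxv)

/-- If a 3-form `ω` on a finite-dimensional space `V` satisfies (GC3): for every
nonzero `v ∈ V` the 2-form `ω(v) = ω(v ∧ − ∧ −)` has rank greater than 2, then
(a) `ω` is indecomposable, i.e. `x ↦ ω ∧ x` is injective (GC1), and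
(b) `v ↦ ω(v)` is injective (GC2). Here the rank of the 2-form `ω(v)` is the
dimension of the span of the 1-forms `u ↦ ω(v, w, u)`, `w ∈ V`, and `ω ∧ x` is
given on quadruples by the usual shuffle formula. -/
theorem stmt_5 (K V : Type*) [Field K] [CharZero K] [AddCommGroup V] [Module K V]
    [FiniteDimensional K V] (ω : AlternatingMap K V K (Fin 3))
    (hGC3 : ∀ v : V, v ≠ 0 →
      2 < finrank K (Submodule.span K
        {g : V → K | ∃ w : V, g = fun u => ω ![v, w, u]})) :
    (∀ x : Module.Dual K V,
      (∀ v₀ v₁ v₂ v₃ : V,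
        ω ![v₁, v₂, v₃] * x v₀ - ω ![v₀, v₂, v₃] * x v₁ +
          ω ![v₀, v₁, v₃] * x v₂ - ω ![v₀, v₁, v₂] * x v₃ = 0) → x = 0) ∧
    (∀ v : V, (∀ a b : V, ω ![v, a, b] = 0) → v = 0) :=
  stmt_5_general K V ω hGC3
end

section
/- For every n ≥ 2, the sum over j from 0 to ⌊(n−1)/2⌋ of (C(n−2, j) − C(n−2, j−2))² equals (1/(n−1))·C(2n−2, n), the degree of a general linear congruence of lines in Pⁿ. -/
open Finset Nat

private def fc (k j : ℕ) : ℤ :=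
  ((k+2).choose j : ℤ) - (if j < 2 then 0 else ((k+2).choose (j-2) : ℤ))

private lemma vand (m r : ℕ) : ((m + m).choose r : ℤ) = ∑ j ∈ range (r+1), (m.choose j : ℤ) * m.choose (r - j) := by
  rw [Nat.add_choose_eq, Finset.Nat.sum_antidiagonal_eq_sum_range_succ_mk]
  push_cast
  rfl

private lemma sumA' (k : ℕ) : ∑ j ∈ range (k+3), ((k+2).choose j : ℤ)^2 = (2*k+4).choose (k+2) := by
  rw [show 2*k+4 = (k+2)+(k+2) by omega, vand]
  apply Finset.sum_congr rfl
  intro j hj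
  simp only [Finset.mem_range] at hj
  rw [Nat.choose_symm (by omega : j ≤ k+2)]
  ring

private lemma sumA (k : ℕ) : ∑ j ∈ range (k+5), ((k+2).choose j : ℤ)^2 = (2*k+4).choose (k+2) := by
  rw [show k+5 = (k+3)+1+1 by omega, Finset.sum_range_succ, Finset.sum_range_succ,
    Nat.choose_eq_zero_of_lt (by omega : k+2 < k+3), Nat.choose_eq_zero_of_lt (by omega : k+2 < k+3+1)]
  push_cast
  rw [← sumA' k]
  ring

private lemma sumB (k : ℕ) :
    ∑ j ∈ range (k+5), (if j < 2 then (0:ℤ) else ((k+2).choose (j-2) : ℤ))^2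
      = (2*k+4).choose (k+2) := by
  rw [Finset.sum_range_succ', Finset.sum_range_succ']
  rw [if_pos (by omega : (0:ℕ) < 2), if_pos (by omega : (1:ℕ) < 2)]
  have h : ∀ j, (if j+1+1 < 2 then (0:ℤ) else ((k+2).choose (j+1+1-2) : ℤ)) = ((k+2).choose j : ℤ) := by
    intro j; rw [if_neg (by omega), show j+1+1-2 = j from by omega]
  simp only [h]
  rw [sumA' k]
  norm_num

private lemma sumAB (k : ℕ) :
    ∑ j ∈ range (k+5), ((k+2).choose j : ℤ) * (if j < 2 then (0:ℤ) else ((k+2).choose (j-2) : ℤ))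
      = (2*k+4).choose k := by
  rw [Finset.sum_range_succ', Finset.sum_range_succ']
  rw [if_pos (by omega : (0:ℕ) < 2), if_pos (by omega : (1:ℕ) < 2)]
  have h : ∀ j, ((k+2).choose (j+1+1) : ℤ) * (if j+1+1 < 2 then (0:ℤ) else ((k+2).choose (j+1+1-2) : ℤ))
      = ((k+2).choose (j+2) : ℤ) * ((k+2).choose j : ℤ) := by
    intro j; rw [if_neg (by omega), show j+1+1-2 = j from by omega]
  simp only [h, mul_zero, add_zero]
  rw [show k+3 = (k+1)+1+1 by omega, Finset.sum_range_succ, Finset.sum_range_succ,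
    Nat.choose_eq_zero_of_lt (by omega : k+2 < k+1+2), Nat.choose_eq_zero_of_lt (by omega : k+2 < k+1+1+2)]
  push_cast
  rw [zero_mul, zero_mul, add_zero, add_zero]
  rw [show 2*k+4 = (k+2)+(k+2) by omega, vand]
  apply Finset.sum_congr rfl
  intro j hj
  simp only [Finset.mem_range] at hj
  rw [show k - j = k+2 - (j+2) by omega, Nat.choose_symm (by omega : j+2 ≤ k+2)]
  ring

private lemma stepB (k : ℕ) :
    ∑ j ∈ range (k+5), (((k+2).choose j : ℤ) - (if j < 2 then (0:ℤ) else ((k+2).choose (j-2) : ℤ)))^2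
      = 2 * (((2*k+4).choose (k+2) : ℤ) - (2*k+4).choose k) := by
  have expand : ∀ j ∈ range (k+5),
      (((k+2).choose j : ℤ) - (if j < 2 then (0:ℤ) else ((k+2).choose (j-2) : ℤ)))^2
      = ((k+2).choose j : ℤ)^2 + (if j < 2 then (0:ℤ) else ((k+2).choose (j-2) : ℤ))^2
        - 2 * (((k+2).choose j : ℤ) * (if j < 2 then (0:ℤ) else ((k+2).choose (j-2) : ℤ))) := by
    intro j _; ring
  rw [Finset.sum_congr rfl expand, Finset.sum_sub_distrib, Finset.sum_add_distrib,
    ← Finset.mul_sum, sumA, sumB, sumAB]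
  ring

private lemma antisym (k : ℕ) : ∀ j ≤ k+4, fc k (k+4-j) = - fc k j := by
  intro j hj
  unfold fc
  rcases Nat.lt_or_ge j 2 with h2 | h2
  · interval_cases j
    · rw [Nat.sub_zero, if_neg (by omega), if_pos (by omega),
        Nat.choose_eq_zero_of_lt (by omega : k+2 < k+4),
        show k+4-2 = k+2 by omega, Nat.choose_self, Nat.choose_zero_right]
      norm_num
    · rw [show k+4-1 = k+3 by omega, if_neg (by omega), if_pos (by omega),
        Nat.choose_eq_zero_of_lt (by omega : k+2 < k+3),
        show k+3-2 = k+2-1 by omega, Nat.choose_symm (by omega : 1 ≤ k+2)]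
      try (push_cast; ring)
  rcases le_or_gt j (k+2) with h3 | h3
  · rw [if_neg (by omega : ¬ (k+4-j < 2)), if_neg (by omega : ¬ (j < 2)),
      show k+4-j-2 = k+2-j by omega,
      show k+4-j = k+2-(j-2) by omega,
      Nat.choose_symm (by omega : j-2 ≤ k+2), Nat.choose_symm (by omega : j ≤ k+2)]
    try ring
  · have hj2 : j = k+3 ∨ j = k+4 := by omega
    rcases hj2 with rfl | rfl
    · rw [show k+4-(k+3) = 1 by omega, if_pos (by omega), if_neg (by omega),
        show k+3-2 = k+2-1 by omega,
        Nat.choose_eq_zero_of_lt (by omega : k+2 < k+3),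
        Nat.choose_symm (by omega : 1 ≤ k+2)]
      try (push_cast; ring)
    · rw [show k+4-(k+4) = 0 by omega, if_pos (by omega), if_neg (by omega),
        show k+4-2 = k+2 by omega,
        Nat.choose_eq_zero_of_lt (by omega : k+2 < k+4),
        Nat.choose_self, Nat.choose_zero_right]
      norm_num

private lemma stepA (k : ℕ) :
    ∑ j ∈ range (k+5), (fc k j)^2 = 2 * ∑ j ∈ range ((k+3)/2 + 1), (fc k j)^2 := by
  have hs : ∀ j ≤ k+4, (fc k (k+4-j))^2 = (fc k j)^2 := by
    intro j hj; rw [antisym k j hj]; ring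
  set t := (k+3)/2 with ht
  have ht1 : t + 1 ≤ k + 5 := by omega
  rw [range_eq_Ico, ← Finset.sum_Ico_consecutive _ (Nat.zero_le (t+1)) ht1]
  have hrefl : ∑ j ∈ Ico (t+1) (k+5), (fc k j)^2 = ∑ j ∈ range (k+4-t), (fc k j)^2 := by
    rw [range_eq_Ico]
    apply Finset.sum_nbij' (fun j => k+4-j) (fun j => k+4-j)
    · intro a ha; simp only [Finset.mem_Ico] at *; omega
    · intro a ha; simp only [Finset.mem_Ico] at *; omega
    · intro a ha; simp only [Finset.mem_Ico] at ha; omega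
    · intro a ha; simp only [Finset.mem_Ico] at ha; omega
    · intro a ha; simp only [Finset.mem_Ico] at ha
      have h := hs (k+4-a) (by omega)
      rw [show k+4-(k+4-a) = a by omega] at h
      exact h
  rw [hrefl, ← range_eq_Ico]
  rcases Nat.even_or_odd k with ⟨l, hl⟩ | ⟨l, hl⟩
  · have h1 : t = l + 1 := by omega
    have h2 : k + 4 - t = (l+2) + 1 := by omega
    have hmid : fc k (l+2) = 0 := by
      unfold fc
      rw [if_neg (by omega), show l+2-2 = l by omega,
        show l+2 = k+2-l by omega, Nat.choose_symm (by omega : l ≤ k+2)]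
      ring
    rw [h2, h1, show l+1+1 = l+2 from by omega,
      Finset.sum_range_succ (fun j => fc k j ^ 2) (l+2)]
    simp only [hmid]
    ring
  · have h2 : k + 4 - t = t + 1 := by omega
    rw [h2]; ring

private lemma stepC (k : ℕ) : ((k:ℤ)+3) * (((2*k+4).choose (k+2) : ℤ) - (2*k+4).choose k) = (2*k+6).choose (k+4) := by
  have h1 := Nat.cast_choose ℚ (show k+2 ≤ 2*k+4 by omega)
  have h2 := Nat.cast_choose ℚ (show k ≤ 2*k+4 by omega)
  have h3 := Nat.cast_choose ℚ (show k+4 ≤ 2*k+6 by omega)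
  have e1 : 2*k+4 - (k+2) = k+2 := by omega
  have e2 : 2*k+4 - k = k+4 := by omega
  have e3 : 2*k+6 - (k+4) = k+2 := by omega
  rw [e1] at h1; rw [e2] at h2; rw [e3] at h3
  have : (((k:ℤ)+3) * (((2*k+4).choose (k+2) : ℤ) - (2*k+4).choose k) : ℚ) = ((2*k+6).choose (k+4) : ℚ) := by
    push_cast
    rw [h1, h2, h3]
    have f1 : ((k+2)! : ℚ) = (k+2)*(k+1)*(k !) := by push_cast [Nat.factorial_succ]; ring
    have f2 : ((k+4)! : ℚ) = (k+4)*(k+3)*(k+2)*(k+1)*(k !) := by push_cast [Nat.factorial_succ]; ring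
    have f3 : ((2*k+6)! : ℚ) = (2*k+6)*(2*k+5)*((2*k+4)!) := by
      have : 2*k+6 = (2*k+4)+1+1 := by omega
      rw [this]; push_cast [Nat.factorial_succ]; ring
    rw [f1, f2, f3]
    have hk : (k ! : ℚ) ≠ 0 := by positivity
    field_simp
    ring
  exact_mod_cast this

/-- For every `n ≥ 2`, the sum over `j` from `0` to `⌊(n-1)/2⌋` of
`(C(n-2, j) - C(n-2, j-2))²` equals `(1/(n-1))·C(2n-2, n)` (stated after
multiplying through by `n - 1`). -/
theorem stmt_16 (n : ℕ) (hn : 2 ≤ n) :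
    ((n : ℤ) - 1) *
      ∑ j ∈ Finset.range ((n - 1) / 2 + 1),
        ((Nat.choose (n - 2) j : ℤ) -
          (if j < 2 then 0 else (Nat.choose (n - 2) (j - 2) : ℤ)))^2 =
    Nat.choose (2 * n - 2) n := by
  rcases Nat.lt_or_ge n 4 with h4 | h4
  · interval_cases n
    · norm_num [Finset.sum_range_succ]
    · norm_num [Finset.sum_range_succ, Nat.choose]
  · obtain ⟨k, rfl⟩ : ∃ k, n = k + 4 := ⟨n - 4, by omega⟩
    rw [show k+4-1 = k+3 by omega, show k+4-2 = k+2 by omega,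
      show 2*(k+4)-2 = 2*k+6 by omega]
    have hbody : ∑ j ∈ Finset.range ((k+3)/2 + 1),
        (((k+2).choose j : ℤ) - (if j < 2 then 0 else ((k+2).choose (j-2) : ℤ)))^2
        = ∑ j ∈ Finset.range ((k+3)/2 + 1), (fc k j)^2 := rfl
    rw [hbody]
    have ha := stepA k
    have hb := stepB k
    have hc := stepC k
    have hbody2 : ∑ j ∈ range (k+5),
        (((k+2).choose j : ℤ) - (if j < 2 then 0 else ((k+2).choose (j-2) : ℤ)))^2
        = ∑ j ∈ range (k+5), (fc k j)^2 := rfl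
    rw [hbody2] at hb
    apply mul_left_cancel₀ (two_ne_zero (α := ℤ))
    have key : ((k:ℤ)+3) * (2 * ∑ j ∈ Finset.range ((k+3)/2 + 1), (fc k j)^2)
        = ((k:ℤ)+3) * (2 * (((2*k+4).choose (k+2) : ℤ) - (2*k+4).choose k)) := by
      rw [← ha, hb]
    push_cast at key hc ⊢
    nlinarith [key, hc]
end
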